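/- arXiv:2601.05928 — 2 statements merged into one kernel-verified Lean document; each statement's English description precedes it below -/
import Mathlib

section
/- Autonomous moment-matching dilation: Let H and K be Hermitian N × N complex matrices and L := −iH + K. Let F be a d_A × d_A complex matrix and r, l ∈ ℂ^{d_A} satisfy the moment-matching condition l† F^k r = 1 for every integer k ≥ 0. Define the dilated generator H̃ := I_A ⊗ H + i F ⊗ K on ℂ^{d_A} ⊗ ℂ^N. Then for all t ≥ 0: exp(t L) = (l† ⊗ I_N) · exp(−i t H̃) · (r ⊗ I_N). -/
/-!
Since `(-i t)(i F) = t F`, the generator `-i t H̃` is `G = I_A ⊗ A + F ⊗ B` with `A = -i t H` and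
`B = t K`. For a vector `v`, `G (v ⊗ I) = (v ⊗ I) A + (F v ⊗ I) B`, so `G^n (r ⊗ I)` expands into
the words of length `n` in `A` and `B`, each attached to a vector `F^k r`; the moment condition
`l† F^k r = 1` makes `(l† ⊗ I) G^n (r ⊗ I) = (A + B)^n`. The sandwich `M ↦ (l† ⊗ I) M (r ⊗ I)`
is linear, hence commutes with the exponential series.
-/

open Matrix Kronecker

noncomputable def readL {dA N : ℕ} (l : Fin dA → ℂ) :
    Matrix (Fin N) (Fin dA × Fin N) ℂ :=
  Matrix.of fun i p => star (l p.1) * (if p.2 = i then 1 else 0)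

noncomputable def embedR {dA N : ℕ} (r : Fin dA → ℂ) :
    Matrix (Fin dA × Fin N) (Fin N) ℂ :=
  Matrix.of fun p i => r p.1 * (if p.2 = i then 1 else 0)

/-- The dilated Hamiltonian `H̃ := I_A ⊗ H + (i F) ⊗ K`. -/
noncomputable def dilH {dA N : ℕ} (F : Matrix (Fin dA) (Fin dA) ℂ)
    (H K : Matrix (Fin N) (Fin N) ℂ) :
    Matrix (Fin dA × Fin N) (Fin dA × Fin N) ℂ :=
  (1 : Matrix (Fin dA) (Fin dA) ℂ) ⊗ₖ H + (Complex.I • F) ⊗ₖ K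

open NormedSpace in
theorem LinearMap.map_exp_of_map_pow {𝕂 𝔸 𝔹 : Type*} [RCLike 𝕂]
    [NormedRing 𝔸] [NormedAlgebra 𝕂 𝔸] [FiniteDimensional 𝕂 𝔸]
    [Ring 𝔹] [Algebra 𝕂 𝔹] [TopologicalSpace 𝔹] [IsTopologicalRing 𝔹] [ContinuousSMul 𝕂 𝔹]
    [T2Space 𝔹] (Φ : 𝔸 →ₗ[𝕂] 𝔹) {x : 𝔸} {y : 𝔹} (h : ∀ n : ℕ, Φ (x ^ n) = y ^ n) :
    Φ (exp x) = exp y := by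
  have := FiniteDimensional.complete 𝕂 𝔸
  rw [exp_eq_tsum 𝕂, exp_eq_tsum 𝕂, ← Φ.coe_toContinuousLinearMap',
    ContinuousLinearMap.map_tsum _ (expSeries_summable' x)]
  simp only [map_smul, LinearMap.coe_toContinuousLinearMap', h]

theorem Matrix.map_exp_of_map_pow {𝕂 m n : Type*} [RCLike 𝕂]
    [Fintype m] [DecidableEq m] [Fintype n] [DecidableEq n]
    (Φ : Matrix m m 𝕂 →ₗ[𝕂] Matrix n n 𝕂) {X : Matrix m m 𝕂} {Y : Matrix n n 𝕂}
    (h : ∀ k : ℕ, Φ (X ^ k) = Y ^ k) :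
    Φ (NormedSpace.exp X) = NormedSpace.exp Y := by
  let _ : NormedRing (Matrix m m 𝕂) := Matrix.linftyOpNormedRing
  let _ : NormedAlgebra 𝕂 (Matrix m m 𝕂) := Matrix.linftyOpNormedAlgebra
  exact Φ.map_exp_of_map_pow h

section Dilation

variable {dA N : ℕ}

theorem readL_mul_embedR (l v : Fin dA → ℂ) :
    readL (N := N) l * embedR (N := N) v = (star l ⬝ᵥ v) • (1 : Matrix (Fin N) (Fin N) ℂ) := by
  ext i j
  by_cases h : i = j <;>
    simp [h, Matrix.mul_apply, readL, embedR, dotProduct, Fintype.sum_prod_type, mul_comm]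

theorem kronecker_mul_embedR (F : Matrix (Fin dA) (Fin dA) ℂ) (B : Matrix (Fin N) (Fin N) ℂ)
    (v : Fin dA → ℂ) : (F ⊗ₖ B) * embedR (N := N) v = embedR (N := N) (F *ᵥ v) * B := by
  ext p j
  simp only [Matrix.mul_apply, embedR, kroneckerMap_apply, of_apply, mulVec, dotProduct,
    Fintype.sum_prod_type, mul_ite, ite_mul, mul_zero, zero_mul, mul_one, Finset.sum_ite_eq,
    Finset.sum_ite_eq', Finset.mem_univ, if_true, Finset.sum_mul]
  exact Finset.sum_congr rfl fun _ _ => by ring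

theorem dilation_mul_embedR (F : Matrix (Fin dA) (Fin dA) ℂ) (A B : Matrix (Fin N) (Fin N) ℂ)
    (v : Fin dA → ℂ) :
    ((1 : Matrix (Fin dA) (Fin dA) ℂ) ⊗ₖ A + F ⊗ₖ B) * embedR (N := N) v =
      embedR (N := N) v * A + embedR (N := N) (F *ᵥ v) * B := by
  rw [Matrix.add_mul, kronecker_mul_embedR, kronecker_mul_embedR, one_mulVec]

theorem readL_mul_dilation_pow_mul_embedR (F : Matrix (Fin dA) (Fin dA) ℂ)
    (A B : Matrix (Fin N) (Fin N) ℂ) {l v : Fin dA → ℂ}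
    (hv : ∀ k : ℕ, star l ⬝ᵥ (F ^ k *ᵥ v) = 1) (n : ℕ) :
    readL (N := N) l * ((1 : Matrix (Fin dA) (Fin dA) ℂ) ⊗ₖ A + F ⊗ₖ B) ^ n * embedR (N := N) v =
      (A + B) ^ n := by
  set G := (1 : Matrix (Fin dA) (Fin dA) ℂ) ⊗ₖ A + F ⊗ₖ B
  induction n generalizing v with
  | zero =>
    have hv0 : star l ⬝ᵥ v = 1 := by simpa using hv 0
    rw [pow_zero, Matrix.mul_one, readL_mul_embedR, hv0, one_smul, pow_zero]
  | succ n ih =>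
    have hFv : ∀ k : ℕ, star l ⬝ᵥ (F ^ k *ᵥ (F *ᵥ v)) = 1 := fun k => by
      rw [mulVec_mulVec, ← pow_succ]; exact hv (k + 1)
    calc readL (N := N) l * G ^ (n + 1) * embedR (N := N) v
        = readL (N := N) l * G ^ n * (G * embedR (N := N) v) := by
          rw [pow_succ]; simp only [Matrix.mul_assoc]
      _ = readL (N := N) l * G ^ n * embedR (N := N) v * A +
            readL (N := N) l * G ^ n * embedR (N := N) (F *ᵥ v) * B := by
          rw [dilation_mul_embedR, Matrix.mul_add]; simp only [Matrix.mul_assoc]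
      _ = (A + B) ^ (n + 1) := by rw [ih hv, ih hFv, ← Matrix.mul_add, pow_succ]

end Dilation

theorem autonomous_dilation_general (dA N : ℕ)
    (H K : Matrix (Fin N) (Fin N) ℂ)
    (F : Matrix (Fin dA) (Fin dA) ℂ) (r l : Fin dA → ℂ)
    (hmm : ∀ k : ℕ, star l ⬝ᵥ (F ^ k *ᵥ r) = 1)
    (t : ℝ) :
    NormedSpace.exp ((t : ℂ) • (-Complex.I • H + K)) =
      readL (N := N) l * (NormedSpace.exp ((-Complex.I * (t : ℂ)) • dilH F H K) :
        Matrix (Fin dA × Fin N) (Fin dA × Fin N) ℂ) * embedR (N := N) r := by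
  have hdil : (-Complex.I * t) • dilH F H K =
      (1 : Matrix (Fin dA) (Fin dA) ℂ) ⊗ₖ ((-Complex.I * t) • H) + F ⊗ₖ ((t : ℂ) • K) := by
    have hscal : -Complex.I * t * Complex.I = t := by
      linear_combination (-(t : ℂ)) * Complex.I_sq
    rw [dilH, smul_add, smul_kronecker, smul_smul, hscal, ← kronecker_smul, ← kronecker_smul]
  have hL : (t : ℂ) • (-Complex.I • H + K) = (-Complex.I * t) • H + (t : ℂ) • K := by
    rw [smul_add, smul_smul, mul_comm]
  let sandwich := mulLeftLinearMap (Fin N) ℂ (readL (N := N) l) ∘ₗ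
    mulRightLinearMap (Fin dA × Fin N) ℂ (embedR (N := N) r)
  rw [hdil, hL, Matrix.mul_assoc]
  refine (Matrix.map_exp_of_map_pow sandwich fun n => ?_).symm
  simpa [sandwich, Matrix.mul_assoc] using readL_mul_dilation_pow_mul_embedR F _ _ hmm n

/-- **Autonomous moment-matching dilation.** For Hermitian `H, K`,
`L := −iH + K`, and a moment-matching triple `(F, r, l)`, the non-unitary semigroup
`exp(t L)` is recovered from the dilated unitary evolution:
`exp(t L) = (l† ⊗ I_N) exp(−i t H̃) (r ⊗ I_N)` for all `t ≥ 0`. -/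
theorem autonomous_dilation (dA N : ℕ) (hdA : 1 ≤ dA) (hN : 1 ≤ N)
    (H K : Matrix (Fin N) (Fin N) ℂ) (hH : H.IsHermitian) (hK : K.IsHermitian)
    (F : Matrix (Fin dA) (Fin dA) ℂ) (r l : Fin dA → ℂ)
    (hmm : ∀ k : ℕ, star l ⬝ᵥ (F ^ k *ᵥ r) = 1)
    (t : ℝ) (ht : 0 ≤ t) :
    NormedSpace.exp ((t : ℂ) • (-Complex.I • H + K)) =
      readL (N := N) l * (NormedSpace.exp ((-Complex.I * (t : ℂ)) • dilH F H K) :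
        Matrix (Fin dA × Fin N) (Fin dA × Fin N) ℂ) * embedR (N := N) r :=
  autonomous_dilation_general dA N H K F r l hmm t
end

section
/- First-column expansion of the interaction unitary: Let S be a finite nonempty index set, G_α ∈ ℂ^{N×N} for α ∈ S, Ω := Σ_{α∈S} ( e_α e_0† ⊗ G_α − e_0 e_α† ⊗ G_α† ), R² := Σ_{α∈S} G_α† G_α, U := exp(Ω), Ξ := I − (1/2) R² + (1/24) (R²)², and Λ := I − (1/6) R². Then there exists a constant C > 0 depending only on |S| such that, whenever g := max_{α∈S} ‖G_α‖ ≤ 1, for all ψ ∈ ℂ^N: ‖ U (e_0 ⊗ ψ) − [ e_0 ⊗ (Ξ ψ) + Σ_{α∈S} e_α ⊗ (G_α Λ ψ) ] ‖ ≤ C · g⁵ · ‖ψ‖. -/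
open Matrix Kronecker

/-- The Euclidean (ℓ²) norm of a finitely-indexed complex vector. -/
noncomputable def euclNorm {ι : Type*} [Fintype ι] (v : ι → ℂ) : ℝ :=
  ‖(WithLp.equiv 2 (ι → ℂ)).symm v‖

/-- The ℓ²→ℓ² operator norm of a complex matrix. -/
noncomputable def matOpNorm {n : Type*} [Fintype n] [DecidableEq n]
    (A : Matrix n n ℂ) : ℝ :=
  ‖Matrix.toEuclideanCLM (𝕜 := ℂ) A‖

noncomputable def repIntGen {S : Type*} [Fintype S] [DecidableEq S] {N : ℕ}
    (G : S → Matrix (Fin N) (Fin N) ℂ) :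
    Matrix (Option S × Fin N) (Option S × Fin N) ℂ :=
  ∑ α : S,
    (Matrix.single (some α) (none : Option S) (1 : ℂ) ⊗ₖ G α -
      Matrix.single (none : Option S) (some α) (1 : ℂ) ⊗ₖ (G α)ᴴ)

noncomputable def repIntR2 {S : Type*} [Fintype S] {N : ℕ}
    (G : S → Matrix (Fin N) (Fin N) ℂ) : Matrix (Fin N) (Fin N) ℂ :=
  ∑ α : S, (G α)ᴴ * G α

def e0Embed {S : Type*} {N : ℕ} (ψ : Fin N → ℂ) : Option S × Fin N → ℂ :=
  fun p => match p.1 with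
    | none => ψ p.2
    | some _ => 0

def excitedEmbed {S : Type*} {N : ℕ} (φ : S → Fin N → ℂ) : Option S × Fin N → ℂ :=
  fun p => match p.1 with
    | none => 0
    | some α => φ α p.2

/-- `Ξ := I − (1/2)R² + (1/24)(R²)²`. -/
noncomputable def repIntXi {S : Type*} [Fintype S] {N : ℕ}
    (G : S → Matrix (Fin N) (Fin N) ℂ) : Matrix (Fin N) (Fin N) ℂ :=
  1 - (1 / 2 : ℂ) • repIntR2 G + (1 / 24 : ℂ) • (repIntR2 G * repIntR2 G)

/-- `Λ := I − (1/6)R²`. -/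
noncomputable def repIntLam {S : Type*} [Fintype S] {N : ℕ}
    (G : S → Matrix (Fin N) (Fin N) ℂ) : Matrix (Fin N) (Fin N) ℂ :=
  1 - (1 / 6 : ℂ) • repIntR2 G

/-- `g := max_{α∈S} ‖G_α‖` (operator norm). -/
noncomputable def gMax {S : Type*} [Fintype S] [Nonempty S] {N : ℕ}
    (G : S → Matrix (Fin N) (Fin N) ℂ) : ℝ :=
  Finset.univ.sup' Finset.univ_nonempty fun α => matOpNorm (G α)

/-!
The generator `Ω` maps `e₀ ⊗ ψ` to `∑_α e_α ⊗ G_α ψ` and `∑_α e_α ⊗ φ_α` to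
`-e₀ ⊗ ∑_α G_α† φ_α`, so `Ω²` acts on the `e₀` column as `-R²`. Hence the degree-four Taylor
polynomial of `exp Ω` sends `e₀ ⊗ ψ` exactly to `e₀ ⊗ Ξψ + ∑_α e_α ⊗ G_α Λ ψ`. The tail of the
exponential series is at most `‖Ω‖⁵ e^‖Ω‖`, and `‖Ω‖ ≤ 2|S| g`, which gives the constant
`C = (2|S|)⁵ e^{2|S|}`.
-/

section ExpTaylor

open scoped Nat

theorem norm_exp_sub_sum_range_le {𝕂 𝔸 : Type*} [RCLike 𝕂] [NormedRing 𝔸]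
    [NormedAlgebra 𝕂 𝔸] [CompleteSpace 𝔸] {n : ℕ} (hn : n ≠ 0) (A : 𝔸) :
    ‖NormedSpace.exp A - ∑ k ∈ Finset.range n, ((k ! : 𝕂)⁻¹) • A ^ k‖ ≤
      ‖A‖ ^ n * Real.exp ‖A‖ := by
  have hnorm := NormedSpace.norm_expSeries_summable' (𝕂 := 𝕂) A
  rw [congrFun (NormedSpace.exp_eq_tsum 𝕂) A,
    ← (NormedSpace.expSeries_summable' (𝕂 := 𝕂) A).sum_add_tsum_nat_add n, add_sub_cancel_left]
  have hterm (k : ℕ) : ‖(((k + n) ! : 𝕂)⁻¹) • A ^ (k + n)‖ ≤ ‖A‖ ^ n * (‖A‖ ^ k / k !) := by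
    rw [norm_smul, norm_inv, RCLike.norm_natCast, ← div_eq_inv_mul]
    calc ‖A ^ (k + n)‖ / (k + n)! ≤ ‖A‖ ^ (k + n) / k ! := by
          gcongr
          · exact norm_pow_le' A (by omega)
          · exact Nat.le_add_right k n
      _ = ‖A‖ ^ n * (‖A‖ ^ k / k !) := by ring
  calc _ ≤ ∑' k, ‖(((k + n) ! : 𝕂)⁻¹) • A ^ (k + n)‖ :=
        norm_tsum_le_tsum_norm ((summable_nat_add_iff n).mpr hnorm)
    _ ≤ ∑' k, ‖A‖ ^ n * (‖A‖ ^ k / k !) :=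
        ((summable_nat_add_iff n).mpr hnorm).tsum_le_tsum hterm
          ((Real.summable_pow_div_factorial ‖A‖).mul_left _)
    _ = ‖A‖ ^ n * Real.exp ‖A‖ := by
        rw [tsum_mul_left, Real.exp_eq_exp_ℝ, NormedSpace.exp_eq_tsum_div]

end ExpTaylor

section L2OpNorm

open scoped Matrix.Norms.L2Operator

variable {ι n : Type*} [Fintype ι] [Fintype n]

theorem euclNorm_nonneg (v : n → ℂ) : 0 ≤ euclNorm v := norm_nonneg _

theorem euclNorm_eq_sqrt (v : n → ℂ) : euclNorm v = √(∑ i, ‖v i‖ ^ 2) := by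
  simp [euclNorm, EuclideanSpace.norm_eq]

theorem euclNorm_mulVec_le [DecidableEq n] (A : Matrix n n ℂ) (v : n → ℂ) :
    euclNorm (A *ᵥ v) ≤ ‖A‖ * euclNorm v :=
  A.l2_opNorm_mulVec _

theorem euclNorm_ite_fst [DecidableEq ι] (a : ι) (v : n → ℂ) :
    euclNorm (fun p : ι × n => if p.1 = a then v p.2 else 0) = euclNorm v := by
  simp only [euclNorm_eq_sqrt, Fintype.sum_prod_type]
  rw [Finset.sum_eq_single a (fun c _ hc => by simp [hc]) (by simp)]
  simp

theorem euclNorm_slice_le (y : ι × n → ℂ) (b : ι) : euclNorm (fun j => y (b, j)) ≤ euclNorm y := by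
  simp only [euclNorm_eq_sqrt, Fintype.sum_prod_type]
  exact Real.sqrt_le_sqrt <| Finset.single_le_sum (f := fun c => ∑ j, ‖y (c, j)‖ ^ 2)
    (fun _ _ => by positivity) (Finset.mem_univ b)

theorem single_one_kronecker_mulVec [DecidableEq ι] (a b : ι) (M : Matrix n n ℂ) (y : ι × n → ℂ) :
    (Matrix.single a b (1 : ℂ) ⊗ₖ M) *ᵥ y =
      fun p => if p.1 = a then (M *ᵥ fun j => y (b, j)) p.2 else 0 := by
  ext ⟨c, i⟩
  by_cases hc : c = a
  · subst hc
    simp [Matrix.mulVec, dotProduct, Fintype.sum_prod_type, Matrix.single_apply, mul_comm]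
  · simp [Matrix.mulVec, dotProduct, hc, Ne.symm hc]

theorem norm_single_one_kronecker_le [DecidableEq ι] [DecidableEq n] (a b : ι)
    (M : Matrix n n ℂ) : ‖Matrix.single a b (1 : ℂ) ⊗ₖ M‖ ≤ ‖M‖ := by
  refine ContinuousLinearMap.opNorm_le_bound _ (norm_nonneg M) fun y => ?_
  change euclNorm ((Matrix.single a b (1 : ℂ) ⊗ₖ M) *ᵥ y.ofLp) ≤ ‖M‖ * euclNorm y.ofLp
  rw [single_one_kronecker_mulVec, euclNorm_ite_fst]
  exact (euclNorm_mulVec_le M _).trans <|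
    mul_le_mul_of_nonneg_left (euclNorm_slice_le _ b) (norm_nonneg M)

end L2OpNorm

section InteractionGenerator

open scoped Matrix.Norms.L2Operator

theorem e0Embed_eq_ite {S : Type*} {N : ℕ} (ψ : Fin N → ℂ) :
    e0Embed (S := S) ψ = fun p => if p.1 = none then ψ p.2 else 0 := by
  ext ⟨_ | _, i⟩ <;> rfl

variable {S : Type*} [Fintype S] {N : ℕ}

theorem euclNorm_e0Embed (ψ : Fin N → ℂ) : euclNorm (e0Embed (S := S) ψ) = euclNorm ψ := by
  classical
  rw [e0Embed_eq_ite]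
  convert euclNorm_ite_fst (none : Option S) ψ

theorem norm_le_gMax [Nonempty S] (G : S → Matrix (Fin N) (Fin N) ℂ) (α : S) :
    ‖G α‖ ≤ gMax G :=
  Finset.le_sup' (fun β => matOpNorm (G β)) (Finset.mem_univ α)

theorem gMax_nonneg [Nonempty S] (G : S → Matrix (Fin N) (Fin N) ℂ) : 0 ≤ gMax G :=
  (norm_nonneg _).trans (norm_le_gMax G (Classical.arbitrary S))

variable [DecidableEq S]

theorem norm_repIntGen_le [Nonempty S] (G : S → Matrix (Fin N) (Fin N) ℂ) :
    ‖repIntGen G‖ ≤ 2 * Fintype.card S * gMax G := by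
  calc ‖repIntGen G‖ ≤ ∑ α : S, (‖G α‖ + ‖(G α)ᴴ‖) := by
        refine (norm_sum_le _ _).trans (Finset.sum_le_sum fun α _ => (norm_sub_le _ _).trans ?_)
        exact add_le_add (norm_single_one_kronecker_le _ _ _) (norm_single_one_kronecker_le _ _ _)
    _ ≤ ∑ _α : S, 2 * gMax G := by
        refine Finset.sum_le_sum fun α _ => ?_
        rw [Matrix.l2_opNorm_conjTranspose]
        linarith [norm_le_gMax G α]
    _ = 2 * Fintype.card S * gMax G := by
        rw [Finset.sum_const, Finset.card_univ, nsmul_eq_mul]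
        ring

theorem repIntGen_mulVec_e0Embed (G : S → Matrix (Fin N) (Fin N) ℂ) (ψ : Fin N → ℂ) :
    repIntGen G *ᵥ e0Embed ψ = excitedEmbed fun α => G α *ᵥ ψ := by
  ext ⟨_ | β, i⟩ <;>
    simp [repIntGen, Matrix.sum_mulVec, Matrix.sub_mulVec, single_one_kronecker_mulVec,
      e0Embed, excitedEmbed, Finset.sum_apply, ← Pi.zero_def]

theorem repIntGen_mulVec_excitedEmbed (G : S → Matrix (Fin N) (Fin N) ℂ) (φ : S → Fin N → ℂ) :
    repIntGen G *ᵥ excitedEmbed φ = e0Embed (-∑ α, (G α)ᴴ *ᵥ φ α) := by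
  ext ⟨_ | β, i⟩ <;>
    simp [repIntGen, Matrix.sum_mulVec, Matrix.sub_mulVec, single_one_kronecker_mulVec,
      e0Embed, excitedEmbed, Finset.sum_apply, ← Pi.zero_def]

end InteractionGenerator

section FirstColumn

open scoped Nat Matrix.Norms.L2Operator

variable {S : Type*} [Fintype S] [DecidableEq S] {N : ℕ}

theorem repIntGen_mulVec_excitedEmbed_mulVec (G : S → Matrix (Fin N) (Fin N) ℂ) (x : Fin N → ℂ) :
    repIntGen G *ᵥ excitedEmbed (fun α => G α *ᵥ x) = e0Embed (-(repIntR2 G *ᵥ x)) := by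
  simp only [repIntGen_mulVec_excitedEmbed, Matrix.mulVec_mulVec, repIntR2, Matrix.sum_mulVec]

theorem sum_range_five_mulVec_e0Embed (G : S → Matrix (Fin N) (Fin N) ℂ) (ψ : Fin N → ℂ) :
    (∑ k ∈ Finset.range 5, ((k ! : ℂ)⁻¹) • repIntGen G ^ k) *ᵥ e0Embed ψ =
      e0Embed (repIntXi G *ᵥ ψ) + excitedEmbed fun α => (G α * repIntLam G) *ᵥ ψ := by
  have pow_succ_mulVec (k : ℕ) (v : Option S × Fin N → ℂ) :
      repIntGen G ^ (k + 1) *ᵥ v = repIntGen G *ᵥ (repIntGen G ^ k *ᵥ v) := by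
    rw [pow_succ', Matrix.mulVec_mulVec]
  have p1 : repIntGen G ^ 1 *ᵥ e0Embed ψ = excitedEmbed fun α => G α *ᵥ ψ := by
    rw [pow_one, repIntGen_mulVec_e0Embed]
  have p2 : repIntGen G ^ 2 *ᵥ e0Embed ψ = e0Embed (-(repIntR2 G *ᵥ ψ)) := by
    rw [pow_succ_mulVec, p1, repIntGen_mulVec_excitedEmbed_mulVec]
  have p3 : repIntGen G ^ 3 *ᵥ e0Embed ψ =
      excitedEmbed fun α => G α *ᵥ -(repIntR2 G *ᵥ ψ) := by
    rw [pow_succ_mulVec, p2, repIntGen_mulVec_e0Embed]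
  have p4 : repIntGen G ^ 4 *ᵥ e0Embed ψ = e0Embed (repIntR2 G *ᵥ (repIntR2 G *ᵥ ψ)) := by
    rw [pow_succ_mulVec, p3, repIntGen_mulVec_excitedEmbed_mulVec, Matrix.mulVec_neg, neg_neg]
  simp only [Finset.sum_range_succ, Finset.sum_range_zero, zero_add, Matrix.add_mulVec,
    Matrix.smul_mulVec, pow_zero, Matrix.one_mulVec, p1, p2, p3, p4]
  ext ⟨_ | α, i⟩ <;>
    simp [e0Embed, excitedEmbed, repIntXi, repIntLam, Matrix.add_mulVec, Matrix.sub_mulVec,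
      Matrix.smul_mulVec, Matrix.mulVec_mulVec, Matrix.mulVec_neg, Matrix.mul_sub,
      Nat.factorial] <;> ring

theorem euclNorm_exp_mulVec_e0Embed_sub_le [Nonempty S] (G : S → Matrix (Fin N) (Fin N) ℂ)
    (ψ : Fin N → ℂ) :
    euclNorm (NormedSpace.exp (repIntGen G) *ᵥ e0Embed ψ -
        (e0Embed (repIntXi G *ᵥ ψ) + excitedEmbed fun α => (G α * repIntLam G) *ᵥ ψ)) ≤
      (2 * Fintype.card S * gMax G) ^ 5 * Real.exp (2 * Fintype.card S * gMax G) *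
        euclNorm ψ := by
  set Ω := repIntGen G
  have hΩ : ‖Ω‖ ≤ 2 * Fintype.card S * gMax G := norm_repIntGen_le G
  rw [← sum_range_five_mulVec_e0Embed, ← Matrix.sub_mulVec]
  calc _ ≤ ‖NormedSpace.exp Ω - ∑ k ∈ Finset.range 5, ((k ! : ℂ)⁻¹) • Ω ^ k‖ *
        euclNorm (e0Embed (S := S) ψ) := euclNorm_mulVec_le _ _
    _ ≤ ‖Ω‖ ^ 5 * Real.exp ‖Ω‖ * euclNorm ψ := by
        rw [euclNorm_e0Embed]
        exact mul_le_mul_of_nonneg_right (norm_exp_sub_sum_range_le (n := 5) (by norm_num) Ω)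
          (euclNorm_nonneg ψ)
    _ ≤ _ := by
        have := euclNorm_nonneg ψ
        have := gMax_nonneg G
        gcongr

end FirstColumn

/-- **First-column expansion of the interaction unitary.** There is a
constant `C > 0` depending only on `|S|` such that whenever `g := max_α ‖G_α‖ ≤ 1`,
`‖U(e_0 ⊗ ψ) − [e_0 ⊗ Ξψ + Σ_α e_α ⊗ G_α Λ ψ]‖ ≤ C g⁵ ‖ψ‖` for `U := exp(Ω)`. -/
theorem interaction_unitary_first_column (S : Type*) [Fintype S] [DecidableEq S]
    [Nonempty S] :
    ∃ C > 0, ∀ (N : ℕ) (G : S → Matrix (Fin N) (Fin N) ℂ),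
      gMax G ≤ 1 → ∀ ψ : Fin N → ℂ,
        euclNorm
          ((NormedSpace.exp (repIntGen G)) *ᵥ e0Embed ψ -
            (e0Embed (repIntXi G *ᵥ ψ) +
              excitedEmbed fun α => (G α * repIntLam G) *ᵥ ψ)) ≤
          C * gMax G ^ 5 * euclNorm ψ := by
  set c : ℝ := 2 * Fintype.card S
  refine ⟨c ^ 5 * Real.exp c, by positivity, fun N G hg ψ => ?_⟩
  have hg₀ := gMax_nonneg G
  have hψ := euclNorm_nonneg ψ
  calc _ ≤ (c * gMax G) ^ 5 * Real.exp (c * gMax G) * euclNorm ψ :=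
        euclNorm_exp_mulVec_e0Embed_sub_le G ψ
    _ ≤ (c * gMax G) ^ 5 * Real.exp c * euclNorm ψ := by
        gcongr
        exact mul_le_of_le_one_right (by positivity) hg
    _ = c ^ 5 * Real.exp c * gMax G ^ 5 * euclNorm ψ := by ring
end
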